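/- arXiv:2103.07547 — 2 statements merged into one kernel-verified Lean document; each statement's English description precedes it below -/
import Mathlib

section
/- Let q be a prime power, let n, m be positive integers with n | m, and let σ : x ↦ x^{q^s} with gcd(s,m)=1. Let 𝒞 be a set of σ-linearized polynomials over F_{q^m}, let β ∈ F_{q^m}^*, let α_1,…,α_n be an F_q-basis of βF_{q^n}, let C = {(g(α_1),…,g(α_n)) : g ∈ 𝒞} ⊆ F_{q^m}^n, and let d be its minimum rank distance. Suppose there is a positive integer t such that: (1) ⌊(d−1)/2⌋ + 1 ≤ t ≤ d−1; (2) t | n and n−2t+1 ≥ 1; (3) (𝒢_{n,n−2t+1,σ})^{σ^j} = { Σ_{i=j}^{j+n−2t} a_i x^{σ^i} : a_i ∈ F_{q^m} } ⊆ 𝒞 for some integer j with 0 ≤ j < t−1. Then there exists a word w ∈ F_{q^m}^n ∖ C such that |C ∩ B_t(w)| ≥ (q^n−1)/(q^t−1). -/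
/-!
Write `F = 𝔽_{q^n}`, `E = 𝔽_{q^t}`, `N = n / t` and `T = ∑_{i<N} σ^{ti}`. Since `gcd(s, m) = 1`,
`T` restricted to `F` is the trace of `F/E`, a nonzero `E`-linear form `F → E`.
For `γ ∈ F^*` and `c = γ / β` let `e_c(x) = σ^j(σ^{t(N-1)}(c)⁻¹ · T(c x))`. Its
`σ^{j+t(N-1)}`-coefficient is `1`, so `x^{σ^{j+t(N-1)}} - e_c(x)` lies in
`(𝒢_{n,n-2t+1,σ})^{σ^j}`; evaluated at the `α_i` it gives a codeword `c_γ` with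
`w - c_γ = (e_c(α_i))_i`, where `w = (α_i^{σ^{j+t(N-1)}})_i`. As `e_c(βF) ⊆ σ^j(σ^{t(N-1)}(c)⁻¹ E)`,
`rk(w - c_γ) ≤ t`. Nondegeneracy of `T` gives `w ≠ c_γ`, hence `w ∉ C` (else `d ≤ t`), and shows
that `c_γ = c_γ'` forces `γ / γ' ∈ E`, so there are at least `(q^n - 1) / (q^t - 1)` codewords
`c_γ`.
-/

/-- Rank weight of a vector `v ∈ K^n` over `F_q`. -/
noncomputable def rkw (Fq : Type) [Field Fq] {K : Type} [Field K] [Algebra Fq K] {n : ℕ}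
    (v : Fin n → K) : ℕ :=
  Module.finrank Fq ↥(Submodule.span Fq (Set.range v))

/-- Ball of radius `t` around `w` in the rank metric. -/
def ball (Fq : Type) [Field Fq] {K : Type} [Field K] [Algebra Fq K] {n : ℕ}
    (w : Fin n → K) (t : ℕ) : Set (Fin n → K) :=
  {c : Fin n → K | rkw Fq (w - c) ≤ t}

/-- Minimum rank distance of a code `C ⊆ K^n`. -/
noncomputable def minDist (Fq : Type) [Field Fq] {K : Type} [Field K] [Algebra Fq K] {n : ℕ}
    (C : Set (Fin n → K)) : ℕ :=
  sInf {r : ℕ | ∃ u ∈ C, ∃ v ∈ C, u ≠ v ∧ rkw Fq (u - v) = r}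

open Finset Function

theorem rkw_le_finrank_of_forall_mem {Fq K : Type} [Field Fq] [Field K] [Algebra Fq K] {n : ℕ}
    {V : Submodule Fq K} [Module.Finite Fq V] {v : Fin n → K} (hv : ∀ i, v i ∈ V) :
    rkw Fq v ≤ Module.finrank Fq V :=
  Submodule.finrank_mono (Submodule.span_le.2 (Set.range_subset_iff.2 hv))

theorem natCard_eq_pow_of_span_eq_image_mul {Fq K : Type*} [Field Fq] [Fintype Fq] [Field K]
    [Finite K] [Algebra Fq K] {n : ℕ} {α : Fin n → K} (hα : LinearIndependent Fq α) {β : K}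
    (hβ : β ≠ 0) {S : Set K}
    (hspan : (Submodule.span Fq (Set.range α) : Set K) = (β * ·) '' S) :
    Nat.card S = Fintype.card Fq ^ n := by
  have := Fintype.ofFinite (Submodule.span Fq (Set.range α))
  rw [← Nat.card_image_of_injective (mul_right_injective₀ hβ), ← hspan, SetLike.coe_sort_coe,
    Nat.card_eq_fintype_card (α := Submodule.span Fq (Set.range α)),
    Module.card_eq_pow_finrank (K := Fq), finrank_span_eq_card hα, Fintype.card_fin]

theorem Finset.card_le_mul_card_image_of_mul_inv_mem {M β : Type*} [GroupWithZero M]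
    [DecidableEq β] {s L : Finset M} (f : M → β) (hs : (0 : M) ∉ s)
    (h : ∀ a ∈ s, ∀ b ∈ s, f b = f a → b * a⁻¹ ∈ L) : #s ≤ #L * #(s.image f) := by
  refine card_le_mul_card_image s #L fun y hy => ?_
  obtain ⟨a, ha, rfl⟩ := mem_image.1 hy
  have ha0 : a ≠ 0 := ne_of_mem_of_not_mem ha hs
  refine card_le_card_of_injOn (· * a⁻¹) (fun b hb => ?_) fun b _ c _ hbc => ?_
  · rw [mem_coe, mem_filter] at hb
    exact h a ha b hb.1 hb.2
  · exact mul_right_cancel₀ (inv_ne_zero ha0) hbc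

namespace IntermediateField

variable {F K : Type*} [Field F] [Field K] [Algebra F K]

theorem card_filter_mem_erase_zero [Fintype K] [DecidableEq K] (E : IntermediateField F K)
    [DecidablePred (· ∈ E)] : #((univ.filter (· ∈ E)).erase 0) = Nat.card E - 1 := by
  rw [card_erase_of_mem (mem_filter.2 ⟨mem_univ _, zero_mem E⟩), Nat.card_eq_fintype_card,
    Fintype.card_subtype]

theorem mul_inv_mem_of_forall_map_mul_eq {E L : IntermediateField F K} (T : K →ₗ[F] K)
    (hEL : E ≤ L) (hTE : ∀ z ∈ L, T z ∈ E) (hT : ∀ ν ∈ E, ∀ z, T (ν * z) = ν * T z)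
    (hT0 : ∃ y ∈ L, T y ≠ 0) {γ γ' κ : K} (hγ : γ ∈ L) (hγ' : γ' ∈ L)
    (hγ'0 : γ' ≠ 0)
    (h : ∀ y ∈ L, T (γ * y) = κ * T (γ' * y)) : γ * γ'⁻¹ ∈ E := by
  obtain ⟨y₀, hy₀, hTy₀⟩ := hT0
  have hnondeg : ∀ δ ∈ L, δ ≠ 0 → ∃ y ∈ L, T (δ * y) ≠ 0 := fun δ hδ hδ0 =>
    ⟨δ⁻¹ * y₀, mul_mem (inv_mem hδ) hy₀, by rwa [mul_inv_cancel_left₀ hδ0]⟩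
  obtain ⟨y₁, hy₁, hTy₁⟩ := hnondeg γ' hγ' hγ'0
  have hκ : κ ∈ E := by
    rw [eq_div_of_mul_eq hTy₁ (h y₁ hy₁).symm]
    exact div_mem (hTE _ (mul_mem hγ hy₁)) (hTE _ (mul_mem hγ' hy₁))
  have hγκ : γ - κ * γ' = 0 := by
    by_contra hne
    obtain ⟨y, hy, hTy⟩ := hnondeg _ (sub_mem hγ (mul_mem (hEL hκ) hγ')) hne
    rw [sub_mul, mul_assoc, map_sub, hT κ hκ, h y hy, sub_self] at hTy
    exact hTy rfl
  rwa [sub_eq_zero.1 hγκ, mul_inv_cancel_right₀ hγ'0]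

end IntermediateField

namespace AlgHom

section IterSum

variable {R A : Type*} [CommSemiring R] [Semiring A] [Algebra R A]

theorem pow_apply_eq_self_iff (σ : A →ₐ[R] A) (k : ℕ) (x : A) :
    (σ ^ k) x = x ↔ IsPeriodicPt σ k x := by
  rw [AlgHom.coe_pow]; rfl

def iterSum (σ : A →ₐ[R] A) (N : ℕ) : A →ₗ[R] A :=
  ∑ i ∈ range N, (σ ^ i).toLinearMap

theorem iterSum_apply (σ : A →ₐ[R] A) (N : ℕ) (x : A) :
    σ.iterSum N x = ∑ i ∈ range N, (σ ^ i) x := by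
  simp [iterSum]

theorem iterSum_mul_of_isFixedPt (σ : A →ₐ[R] A) (N : ℕ) {ν : A} (hν : IsFixedPt σ ν)
    (x : A) : σ.iterSum N (ν * x) = ν * σ.iterSum N x := by
  simp only [iterSum_apply, map_mul, mul_sum]
  refine sum_congr rfl fun i _ => ?_
  rw [(pow_apply_eq_self_iff σ i ν).2 (hν.isPeriodicPt i)]

theorem isFixedPt_iterSum (σ : A →ₐ[R] A) {N : ℕ} {x : A} (hx : IsPeriodicPt σ N x) :
    IsFixedPt σ (σ.iterSum N x) := by
  rcases N with _ | M
  · simp [IsFixedPt, iterSum_apply]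
  · have htop : (σ ^ (M + 1)) x = (σ ^ 0) x := by
      rw [pow_apply_eq_self_iff σ _ x |>.2 hx, pow_zero, one_apply]
    simp only [IsFixedPt, iterSum_apply, map_sum, ← mul_apply, ← pow_succ']
    rw [sum_range_succ, htop, sum_range_succ' _ M]

end IterSum

section Codeword

variable {R K : Type*} [CommSemiring R] [Field K] [Algebra R K] (σ : K →ₐ[R] K) (t N j : ℕ)

def errorMap (c : K) : K →ₗ[R] K :=
  (σ ^ j).toLinearMap ∘ₗ LinearMap.mulLeft R ((σ ^ (t * (N - 1))) c)⁻¹ ∘ₗ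
    (σ ^ t).iterSum N ∘ₗ LinearMap.mulLeft R c

def codewordPoly (c x : K) : K :=
  (σ ^ (j + t * (N - 1))) x - σ.errorMap t N j c x

variable {σ t N j}

theorem errorMap_apply (c x : K) :
    σ.errorMap t N j c x = (σ ^ j) (((σ ^ (t * (N - 1))) c)⁻¹ * (σ ^ t).iterSum N (c * x)) :=
  rfl

theorem errorMap_eq_sum (c x : K) :
    σ.errorMap t N j c x = ∑ i ∈ range N,
      (σ ^ j) (((σ ^ (t * (N - 1))) c)⁻¹ * (σ ^ (t * i)) c) * (σ ^ (j + t * i)) x := by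
  simp only [errorMap_apply, iterSum_apply, mul_sum, map_sum, ← pow_mul, map_mul, mul_assoc,
    pow_add, mul_apply]

theorem errorMap_mul_inv_mul {β : K} (hβ : β ≠ 0) (γ y : K) :
    σ.errorMap t N j (γ * β⁻¹) (β * y) =
      (σ ^ j) (((σ ^ (t * (N - 1))) (γ * β⁻¹))⁻¹ * (σ ^ t).iterSum N (γ * y)) := by
  rw [errorMap_apply, mul_assoc, inv_mul_cancel_left₀ hβ]

theorem codewordPoly_eq_neg_sum (hN : 0 < N) {c : K} (hc : c ≠ 0) (x : K) :
    σ.codewordPoly t N j c x = -∑ i ∈ range (N - 1),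
      (σ ^ j) (((σ ^ (t * (N - 1))) c)⁻¹ * (σ ^ (t * i)) c) * (σ ^ (j + t * i)) x := by
  have htop : ((σ ^ (t * (N - 1))) c)⁻¹ * (σ ^ (t * (N - 1))) c = 1 :=
    inv_mul_cancel₀ ((map_ne_zero _).2 hc)
  rw [codewordPoly, errorMap_eq_sum, ← Nat.sub_add_cancel hN, sum_range_succ,
    Nat.add_sub_cancel, htop, map_one, one_mul]
  ring

theorem exists_coeff_codewordPoly (ht : 0 < t) (hN : 0 < N) {c : K} (hc : c ≠ 0) {L : ℕ}
    (hL : ∀ i < N - 1, t * i < L) :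
    ∃ a : Fin L → K, ∀ x, σ.codewordPoly t N j c x = ∑ k : Fin L, a k * (σ ^ (j + k)) x := by
  classical
  let b : ℕ → K := fun i => -(σ ^ j) (((σ ^ (t * (N - 1))) c)⁻¹ * (σ ^ (t * i)) c)
  let S : Finset ℕ := (range (N - 1)).image (t * ·)
  have hS : S ⊆ range L := by
    simpa [S, subset_iff] using hL
  refine ⟨fun k => if (k : ℕ) ∈ S then b (k / t) else 0, fun x => ?_⟩
  rw [Fin.sum_univ_eq_sum_range (fun k => (if k ∈ S then b (k / t) else 0) * (σ ^ (j + k)) x),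
    codewordPoly_eq_neg_sum hN hc]
  simp only [ite_mul, zero_mul, sum_ite_mem, inter_eq_right.2 hS, S,
    sum_image fun _ _ _ _ h => Nat.eq_of_mul_eq_mul_left ht h, Nat.mul_div_cancel_left _ ht, b,
    neg_mul, sum_neg_distrib]

end Codeword

end AlgHom

namespace FiniteField

section Frobenius

variable {Fq K : Type*} [Field Fq] [Fintype Fq] [Field K] [Algebra Fq K]

local notation "φ" => frobeniusAlgHom Fq K

theorem frobeniusAlgHom_pow_apply (k : ℕ) (x : K) : (φ ^ k) x = x ^ Fintype.card Fq ^ k := by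
  rw [AlgHom.coe_pow, coe_frobeniusAlgHom, pow_iterate]

variable (Fq K) in
def frobFixed (k : ℕ) : IntermediateField Fq K :=
  (AlgHom.equalizer (φ ^ k) (AlgHom.id Fq K)).toIntermediateField fun x hx => by
    rw [AlgHom.mem_equalizer] at hx ⊢
    rw [map_inv₀, hx, AlgHom.id_apply, AlgHom.id_apply]

theorem mem_frobFixed {k : ℕ} {x : K} : x ∈ frobFixed Fq K k ↔ IsPeriodicPt φ k x :=
  AlgHom.pow_apply_eq_self_iff _ k x

theorem mem_frobFixed_iff_pow {k : ℕ} {x : K} :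
    x ∈ frobFixed Fq K k ↔ x ^ Fintype.card Fq ^ k = x := by
  rw [← frobeniusAlgHom_pow_apply]; rfl

theorem frobFixed_mono {k l : ℕ} (h : k ∣ l) : frobFixed Fq K k ≤ frobFixed Fq K l :=
  fun _ hx => mem_frobFixed.2 ((mem_frobFixed.1 hx).trans_dvd h)

theorem mem_frobFixed_finrank [Finite K] (x : K) :
    x ∈ frobFixed Fq K (Module.finrank Fq K) := by
  rw [mem_frobFixed, ← orderOf_frobeniusAlgHom, IsPeriodicPt, IsFixedPt, ← AlgHom.coe_pow,
    pow_orderOf_eq_one, AlgHom.one_apply]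

open Polynomial in
theorem card_frobFixed_le [Finite K] {k : ℕ} (hk : k ≠ 0) :
    Nat.card (frobFixed Fq K k) ≤ Fintype.card Fq ^ k := by
  classical
  have := Fintype.ofFinite K
  let Z : Finset K := {x | x ∈ frobFixed Fq K k}
  have hroots : Z.val ⊆ (X ^ Fintype.card Fq ^ k - X : K[X]).roots := fun x hx => by
    rw [mem_roots (FiniteField.X_pow_card_pow_sub_X_ne_zero K hk Fintype.one_lt_card), IsRoot,
      eval_sub, eval_pow, eval_X, sub_eq_zero, ← mem_frobFixed_iff_pow]
    simpa [Z] using hx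
  calc Nat.card (frobFixed Fq K k) = #Z := by
        rw [← Nat.card_eq_finsetCard]; congr; ext; simp [Z]
    _ ≤ _ := card_le_degree_of_subset_roots hroots
    _ = _ := FiniteField.X_pow_card_pow_sub_X_natDegree_eq K hk Fintype.one_lt_card

theorem finrank_frobFixed_le [Finite K] {k : ℕ} (hk : k ≠ 0) :
    Module.finrank Fq (frobFixed Fq K k) ≤ k := by
  have := Fintype.ofFinite (frobFixed Fq K k)
  rw [← Nat.pow_le_pow_iff_right (Fintype.one_lt_card (α := Fq)), ← Module.card_eq_pow_finrank,
    ← Nat.card_eq_fintype_card]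
  exact card_frobFixed_le hk

theorem iterSum_mem_frobFixed [Finite K] {e N : ℕ} {z : K} (hz : z ∈ frobFixed Fq K (e * N)) :
    (φ ^ e).iterSum N z ∈ frobFixed Fq K (Nat.gcd e (Module.finrank Fq K)) := by
  have hzN : IsPeriodicPt ⇑(φ ^ e) N z := by
    rw [← AlgHom.pow_apply_eq_self_iff, ← pow_mul]; exact hz
  have he : IsPeriodicPt φ e ((φ ^ e).iterSum N z) :=
    (AlgHom.pow_apply_eq_self_iff _ _ _).1 ((φ ^ e).isFixedPt_iterSum hzN)
  exact mem_frobFixed.2 (he.gcd (mem_frobFixed.1 (mem_frobFixed_finrank _)))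

open Polynomial in
theorem exists_iterSum_ne_zero {e n N : ℕ} (hn : 0 < n) (hN : 0 < N)
    (hcard : Nat.card (frobFixed Fq K n) = Fintype.card Fq ^ n)
    (hdiv : ∀ i < N, n ∣ e * i → i = 0) :
    ∃ y ∈ frobFixed Fq K n, (φ ^ e).iterSum N y ≠ 0 := by
  classical
  have hQ : 1 < Fintype.card Fq := Fintype.one_lt_card
  let P : K[X] := ∑ i ∈ range N, X ^ Fintype.card Fq ^ (e * i % n)
  have heval : ∀ y ∈ frobFixed Fq K n, P.eval y = (φ ^ e).iterSum N y := fun y hy => by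
    simp only [P, eval_finsetSum, eval_pow, eval_X, AlgHom.iterSum_apply, ← pow_mul]
    refine sum_congr rfl fun i _ => ?_
    rw [← frobeniusAlgHom_pow_apply, AlgHom.coe_pow, AlgHom.coe_pow,
      (mem_frobFixed.1 hy).iterate_mod_apply]
  have hcoeff : P.coeff 1 = 1 := by
    have hone : ∀ i ∈ range N, (1 = Fintype.card Fq ^ (e * i % n) ↔ i = 0) := fun i hi => by
      rw [eq_comm, Nat.pow_eq_one, ← Nat.dvd_iff_mod_eq_zero]
      constructor
      · rintro (h | h)
        · omega
        · exact hdiv i (mem_range.1 hi) h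
      · rintro rfl; simp
    simp only [P, finsetSum_coeff, coeff_X_pow]
    rw [sum_congr rfl fun i hi => if_congr (hone i hi) rfl rfl, sum_ite_eq',
      if_pos (mem_range.2 hN)]
  have hdeg : P.natDegree < Fintype.card Fq ^ n := by
    refine (natDegree_sum_le_of_forall_le _ _ (n := Fintype.card Fq ^ (n - 1)) fun i _ => ?_)
      |>.trans_lt (Nat.pow_lt_pow_right hQ (by omega))
    rw [natDegree_X_pow]
    exact Nat.pow_le_pow_right (by omega) (by have := Nat.mod_lt (e * i) hn; omega)
  by_contra! h
  have : Finite (frobFixed Fq K n) := Nat.finite_of_card_ne_zero (by rw [hcard]; positivity)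
  have := Fintype.ofFinite (frobFixed Fq K n)
  have hP : P = 0 := eq_zero_of_natDegree_lt_card_of_eval_eq_zero P
    (f := ((↑) : frobFixed Fq K n → K)) Subtype.val_injective
    (fun y => (heval y y.2).trans (h y y.2)) (by rwa [← Nat.card_eq_fintype_card, hcard])
  simp [hP] at hcoeff

theorem card_sub_one_le_mul_card_image [Fintype K] [DecidableEq K] {β : Type*} [DecidableEq β]
    {k l : ℕ} [DecidablePred (· ∈ frobFixed Fq K k)] [DecidablePred (· ∈ frobFixed Fq K l)]
    (hk : k ≠ 0) (hcard : Nat.card (frobFixed Fq K l) = Fintype.card Fq ^ l)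
    (f : K → β) (hf : ∀ a ∈ frobFixed Fq K l, a ≠ 0 → ∀ b ∈ frobFixed Fq K l,
      f b = f a → b * a⁻¹ ∈ frobFixed Fq K k) :
    Fintype.card Fq ^ l - 1 ≤
      (Fintype.card Fq ^ k - 1) * #(((univ.filter (· ∈ frobFixed Fq K l)).erase 0).image f) := by
  let Estar : Finset K := (univ.filter (· ∈ frobFixed Fq K k)).erase 0
  rw [← hcard, ← IntermediateField.card_filter_mem_erase_zero]
  calc _ ≤ #Estar * _ := card_le_mul_card_image_of_mul_inv_mem f (by simp)
          fun a ha b hb hab => by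
            rw [mem_erase, mem_filter] at ha hb
            exact mem_erase.2 ⟨mul_ne_zero hb.1 (inv_ne_zero ha.1),
              mem_filter.2 ⟨mem_univ _, hf a ha.2.2 ha.1 b hb.2.2 hab⟩⟩
    _ ≤ _ := by
      gcongr
      rw [IntermediateField.card_filter_mem_erase_zero]
      exact Nat.sub_le_sub_right (card_frobFixed_le hk) 1

variable {s t N : ℕ}

theorem iterSum_frobeniusAlgHom_pow_mem [Finite K] (hs : s.Coprime (Module.finrank Fq K))
    (ht : t ∣ Module.finrank Fq K) {z : K} (hz : z ∈ frobFixed Fq K (t * N)) :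
    ((φ ^ s) ^ t).iterSum N z ∈ frobFixed Fq K t := by
  have hgcd : Nat.gcd (s * t) (Module.finrank Fq K) = t := by
    rw [Nat.Coprime.gcd_mul_left_cancel t hs, Nat.gcd_eq_left ht]
  have hz' : z ∈ frobFixed Fq K (s * t * N) :=
    frobFixed_mono (by rw [mul_assoc]; exact dvd_mul_left _ _) hz
  simpa only [hgcd, pow_mul] using iterSum_mem_frobFixed hz'

theorem iterSum_frobeniusAlgHom_pow_mul {ν : K} (hν : ν ∈ frobFixed Fq K t) (z : K) :
    ((φ ^ s) ^ t).iterSum N (ν * z) = ν * ((φ ^ s) ^ t).iterSum N z := by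
  refine AlgHom.iterSum_mul_of_isFixedPt _ N ?_ z
  rw [IsFixedPt, ← pow_mul, mul_comm, AlgHom.pow_apply_eq_self_iff]
  exact (mem_frobFixed.1 hν).mul_const s

theorem exists_iterSum_frobeniusAlgHom_pow_ne_zero (ht : 0 < t) (hN : 0 < N)
    (hsN : s.Coprime N)
    (hcard : Nat.card (frobFixed Fq K (t * N)) = Fintype.card Fq ^ (t * N)) :
    ∃ y ∈ frobFixed Fq K (t * N), ((φ ^ s) ^ t).iterSum N y ≠ 0 := by
  rw [← pow_mul]
  refine exists_iterSum_ne_zero (by positivity) hN hcard fun i hi hdvd => ?_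
  rw [mul_comm s t, mul_assoc, Nat.mul_dvd_mul_iff_left ht] at hdvd
  exact Nat.eq_zero_of_dvd_of_lt (hsN.symm.dvd_of_dvd_mul_left hdvd) hi

end Frobenius

section Code

variable {Fq K : Type} [Field Fq] [Fintype Fq] [Field K] [Algebra Fq K] {s t N j : ℕ}

local notation "φ" => frobeniusAlgHom Fq K

theorem rkw_errorMap_le [Finite K] (hs : s.Coprime (Module.finrank Fq K))
    (htN : t * N ∣ Module.finrank Fq K) (ht : t ≠ 0) {c : K} {n : ℕ} {v : Fin n → K}
    (hv : ∀ k, c * v k ∈ frobFixed Fq K (t * N)) :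
    rkw Fq (fun k => (φ ^ s).errorMap t N j c (v k)) ≤ t := by
  let σ := φ ^ s
  let g : K →ₗ[Fq] K :=
    (σ ^ j).toLinearMap ∘ₗ LinearMap.mulLeft Fq ((σ ^ (t * (N - 1))) c)⁻¹
  let V := (Subalgebra.toSubmodule (frobFixed Fq K t).toSubalgebra).map g
  calc rkw Fq (fun k => σ.errorMap t N j c (v k)) ≤ Module.finrank Fq V :=
        rkw_le_finrank_of_forall_mem fun k => Submodule.mem_map_of_mem
          (iterSum_frobeniusAlgHom_pow_mem hs (dvd_of_mul_right_dvd htN) (hv k))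
    _ ≤ Module.finrank Fq (frobFixed Fq K t) := Submodule.finrank_map_le _ _
    _ ≤ t := finrank_frobFixed_le ht

theorem mul_inv_mem_of_errorMap_eq [Finite K] (hs : s.Coprime (Module.finrank Fq K))
    (htN : t * N ∣ Module.finrank Fq K)
    (hT0 : ∃ y ∈ frobFixed Fq K (t * N), ((φ ^ s) ^ t).iterSum N y ≠ 0)
    {β : K} (hβ : β ≠ 0) {γ γ' : K} (hγ : γ ∈ frobFixed Fq K (t * N))
    (hγ' : γ' ∈ frobFixed Fq K (t * N)) (hγ'0 : γ' ≠ 0)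
    (h : ∀ y ∈ frobFixed Fq K (t * N),
      (φ ^ s).errorMap t N j (γ * β⁻¹) (β * y) =
        (φ ^ s).errorMap t N j (γ' * β⁻¹) (β * y)) :
    γ * γ'⁻¹ ∈ frobFixed Fq K t := by
  let σ := φ ^ s
  let θ := σ ^ (t * (N - 1))
  refine IntermediateField.mul_inv_mem_of_forall_map_mul_eq _
    (frobFixed_mono (dvd_mul_right t N))
    (fun z hz => iterSum_frobeniusAlgHom_pow_mem hs (dvd_of_mul_right_dvd htN) hz)
    (fun ν hν z => iterSum_frobeniusAlgHom_pow_mul hν z) hT0 hγ hγ' hγ'0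
    (κ := θ (γ * β⁻¹) * (θ (γ' * β⁻¹))⁻¹) fun y hy => ?_
  have hy := h y hy
  rw [AlgHom.errorMap_mul_inv_mul hβ, AlgHom.errorMap_mul_inv_mul hβ] at hy
  have hy := (σ ^ j).toRingHom.injective hy
  by_cases hγ0 : γ = 0
  · simp [hγ0]
  have hθ : θ (γ * β⁻¹) ≠ 0 := (map_ne_zero _).2 (mul_ne_zero hγ0 (inv_ne_zero hβ))
  rw [mul_assoc, ← hy, mul_inv_cancel_left₀ hθ]

theorem exists_word_near_many_codewords [Fintype K] (j : ℕ) (ht : 0 < t) (hN : 0 < N)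
    (hs : s.Coprime (Module.finrank Fq K)) (htN : t * N ∣ Module.finrank Fq K) {β : K}
    (hβ : β ≠ 0) {α : Fin (t * N) → K} (hα : LinearIndependent Fq α)
    (hspan : (Submodule.span Fq (Set.range α) : Set K) = (β * ·) '' frobFixed Fq K (t * N)) :
    ∃ w : Fin (t * N) → K, ∃ S : Finset (Fin (t * N) → K), S.Nonempty ∧
      (∀ c ∈ S, w ≠ c ∧ rkw Fq (w - c) ≤ t ∧
        ∃ γ ≠ 0, c = fun k => (φ ^ s).codewordPoly t N j γ (α k)) ∧
      Fintype.card Fq ^ (t * N) - 1 ≤ (Fintype.card Fq ^ t - 1) * #S := by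
  classical
  let σ := φ ^ s
  set F := frobFixed Fq K (t * N)
  have hcard : Nat.card F = Fintype.card Fq ^ (t * N) :=
    natCard_eq_pow_of_span_eq_image_mul hα hβ hspan
  obtain ⟨y₀, hy₀, hTy₀⟩ := exists_iterSum_frobeniusAlgHom_pow_ne_zero ht hN
    (hs.coprime_dvd_right (dvd_of_mul_left_dvd htN)) hcard
  have hext : ∀ f g : K →ₗ[Fq] K, (∀ k, f (α k) = g (α k)) → ∀ y ∈ F, f (β * y) = g (β * y) :=
    fun f g h y hy => LinearMap.eqOn_span' (Set.forall_mem_range.2 h)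
      (by rw [hspan]; exact ⟨y, hy, rfl⟩)
  have hαF : ∀ γ ∈ F, ∀ k, γ * β⁻¹ * α k ∈ F := fun γ hγ k => by
    obtain ⟨y, hy, hαk⟩ : α k ∈ (β * ·) '' F := hspan ▸ Submodule.subset_span ⟨k, rfl⟩
    rw [← hαk, mul_assoc, inv_mul_cancel_left₀ hβ]
    exact mul_mem hγ hy
  let cw : K → Fin (t * N) → K := fun γ k => σ.codewordPoly t N j (γ * β⁻¹) (α k)
  let w : Fin (t * N) → K := fun k => (σ ^ (j + t * (N - 1))) (α k)
  have hsub : ∀ γ k, w k - cw γ k = σ.errorMap t N j (γ * β⁻¹) (α k) :=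
    fun _ _ => sub_sub_cancel _ _
  let Fstar : Finset K := (univ.filter (· ∈ F)).erase 0
  have hFstar : ∀ {γ}, γ ∈ Fstar ↔ γ ∈ F ∧ γ ≠ 0 := by simp [Fstar, and_comm]
  refine ⟨w, Fstar.image cw, ⟨cw 1, mem_image_of_mem _ (hFstar.2 ⟨one_mem F, one_ne_zero⟩)⟩,
    ?_, ?_⟩
  · simp only [mem_image, hFstar]
    rintro _ ⟨γ, ⟨hγ, hγ0⟩, rfl⟩
    refine ⟨fun hw => ?_, ?_, γ * β⁻¹, mul_ne_zero hγ0 (inv_ne_zero hβ), rfl⟩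
    · have h0 := hext (σ.errorMap t N j (γ * β⁻¹)) 0
        (fun k => by rw [LinearMap.zero_apply, ← hsub, hw, sub_self])
        (γ⁻¹ * y₀) (mul_mem (inv_mem hγ) hy₀)
      rw [AlgHom.errorMap_mul_inv_mul hβ, mul_inv_cancel_left₀ hγ0, LinearMap.zero_apply,
        map_eq_zero, mul_eq_zero, inv_eq_zero, map_eq_zero] at h0
      exact h0.elim (mul_ne_zero hγ0 (inv_ne_zero hβ)) hTy₀
    · rw [show w - cw γ = _ from funext (hsub γ)]
      exact rkw_errorMap_le hs htN ht.ne' (hαF γ hγ)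
  · exact card_sub_one_le_mul_card_image ht.ne' hcard cw fun a ha ha0 b hb hab =>
      mul_inv_mem_of_errorMap_eq hs htN ⟨y₀, hy₀, hTy₀⟩ hβ hb ha ha0
        (hext _ _ fun k => by rw [← hsub, ← hsub, hab])

end Code

end FiniteField

open FiniteField in
theorem stmt_13_general (q s n m t j : ℕ) (Fq K : Type) [Field Fq] [Fintype Fq] [Field K]
    [Fintype K] [Algebra Fq K]
    (hcard : Fintype.card Fq = q) (hfin : Module.finrank Fq K = m)
    (hn : 0 < n) (hnm : n ∣ m) (hs : Nat.gcd s m = 1)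
    (𝒞 : Set (K → K))
    (β : K) (hβ : β ≠ 0)
    (α : Fin n → K) (hα : LinearIndependent Fq α)
    (hspan : (Submodule.span Fq (Set.range α) : Set K)
      = (fun y : K => β * y) '' {x : K | x ^ q ^ n = x})
    (C : Set (Fin n → K)) (hC : C = (fun g : K → K => fun i : Fin n => g (α i)) '' 𝒞)
    (d : ℕ) (hd : d = minDist Fq C)
    (ht0 : 0 < t)
    (ht2 : (t : ℤ) ≤ (d : ℤ) - 1)
    (htn : t ∣ n)
    (hGab : {f : K → K | ∃ a : Fin (n - 2 * t + 1) → K, ∀ x : K,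
        f x = ∑ i, a i * x ^ ((q ^ s) ^ (j + (i : ℕ)))} ⊆ 𝒞) :
    ∃ w : Fin n → K, w ∉ C ∧
      (q ^ n - 1) / (q ^ t - 1) ≤ Nat.card ↥(C ∩ ball Fq w t) := by
  subst hcard hfin hd
  obtain ⟨N, rfl⟩ := htn
  have hN : 0 < N := Nat.pos_of_mul_pos_left hn
  have hF : {x : K | x ^ Fintype.card Fq ^ (t * N) = x} = frobFixed Fq K (t * N) :=
    Set.ext fun _ => mem_frobFixed_iff_pow.symm
  obtain ⟨w, S, ⟨c₀, hc₀⟩, hS, hcount⟩ := exists_word_near_many_codewords j ht0 hN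
    (Nat.coprime_iff_gcd_eq_one.2 hs) hnm hβ hα (hF ▸ hspan)
  have hSC : ∀ c ∈ S, c ∈ C := fun c hc => by
    obtain ⟨-, -, γ, hγ, rfl⟩ := hS c hc
    obtain ⟨a, ha⟩ := AlgHom.exists_coeff_codewordPoly (σ := frobeniusAlgHom Fq K ^ s)
      (j := j) (L := t * N - 2 * t + 1) ht0 hN hγ fun i hi => by
        have := Nat.mul_le_mul_left t (show i + 2 ≤ N by omega)
        rw [Nat.mul_add] at this
        omega
    rw [hC]
    exact ⟨_, hGab ⟨a, fun x => by simp only [ha, ← pow_mul, frobeniusAlgHom_pow_apply]⟩, rfl⟩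
  refine ⟨w, fun hw => ?_, ?_⟩
  · have : minDist Fq C ≤ rkw Fq (w - c₀) :=
      Nat.sInf_le ⟨w, hw, c₀, hSC c₀ hc₀, (hS c₀ hc₀).1, rfl⟩
    have := (hS c₀ hc₀).2.1
    omega
  · calc _ ≤ #S := Nat.div_le_of_le_mul hcount
      _ = Nat.card (S : Set (Fin (t * N) → K)) := by
        rw [Nat.card_coe_set_eq, Set.ncard_coe_finset]
      _ ≤ Nat.card ↥(C ∩ ball Fq w t) :=
        Nat.card_mono (Set.toFinite _) fun c hc => ⟨hSC c hc, (hS c hc).2.1⟩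

/-- if `𝒞` contains `(𝒢_{n,n−2t+1,σ})^{σ^j}` for some `j < t−1`, with
`t ∣ n`, `n−2t+1 ≥ 1` and `⌊(d−1)/2⌋+1 ≤ t ≤ d−1`, then there is a word `w ∉ C` with
`|C ∩ B_t(w)| ≥ (q^n−1)/(q^t−1)`. -/
theorem stmt_13 (q s n m t j : ℕ) (Fq K : Type) [Field Fq] [Fintype Fq] [Field K]
    [Fintype K] [Algebra Fq K]
    (hcard : Fintype.card Fq = q) (hfin : Module.finrank Fq K = m)
    (hn : 0 < n) (hnm : n ∣ m) (hs : Nat.gcd s m = 1)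
    (𝒞 : Set (K → K))
    (hlin : ∀ f ∈ 𝒞, ∃ N : ℕ, ∃ a : Fin N → K, ∀ x : K,
      f x = ∑ i : Fin N, a i * x ^ ((q ^ s) ^ (i : ℕ)))
    (β : K) (hβ : β ≠ 0)
    (α : Fin n → K) (hα : LinearIndependent Fq α)
    (hspan : (Submodule.span Fq (Set.range α) : Set K)
      = (fun y : K => β * y) '' {x : K | x ^ q ^ n = x})
    (C : Set (Fin n → K)) (hC : C = (fun g : K → K => fun i : Fin n => g (α i)) '' 𝒞)
    (d : ℕ) (hd : d = minDist Fq C)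
    (ht0 : 0 < t)
    (ht1 : (d - 1) / 2 + 1 ≤ t)
    (ht2 : (t : ℤ) ≤ (d : ℤ) - 1)
    (htn : t ∣ n) (hnt : (1 : ℤ) ≤ (n : ℤ) - 2 * t + 1)
    (hj : (j : ℤ) < (t : ℤ) - 1)
    (hGab : {f : K → K | ∃ a : Fin (n - 2 * t + 1) → K, ∀ x : K,
        f x = ∑ i, a i * x ^ ((q ^ s) ^ (j + (i : ℕ)))} ⊆ 𝒞) :
    ∃ w : Fin n → K, w ∉ C ∧
      (q ^ n - 1) / (q ^ t - 1) ≤ Nat.card ↥(C ∩ ball Fq w t) :=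
  stmt_13_general q s n m t j Fq K hcard hfin hn hnm hs 𝒞 β hβ α hα hspan C hC d hd ht0 ht2 htn hGab
end

section
/- Let q be a prime power, let n, m be positive integers with n | m, and let σ : x ↦ x^{q^s} with gcd(s,m)=1. Let 𝒞 be a set of σ-linearized polynomials over F_{q^m}, let β ∈ F_{q^m}^*, let α_1,…,α_n be an F_q-basis of βF_{q^n}, let C = {(g(α_1),…,g(α_n)) : g ∈ 𝒞} ⊆ F_{q^m}^n, and let d be its minimum rank distance. Let l and h be positive integers with n−d+1 ≤ l ≤ n−⌊(d−1)/2⌋−1 and h ≤ l. Suppose: (i) (𝒢_{n,h,σ})^{σ^j} = { Σ_{i=j}^{j+h−1} a_i x^{σ^i} : a_i ∈ F_{q^m} } ⊆ 𝒞 for some integer j with 0 ≤ j ≤ n−l; and (ii) there exists a set Sub of g distinct σ-linearized polynomials, each of the form x^{σ^l} + a_{h−1}x^{σ^{h−1}} + ⋯ + a_0 x with a_0,…,a_{h−1} ∈ F_{q^n}, each having exactly q^l roots in F_{q^n}. Fix an F_q-basis of F_{q^m} and identify each v ∈ F_{q^m}^n with the matrix in F_q^{m×n} whose columns are the coordinate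 vectors of its entries. Then there exists a word w ∈ F_{q^m}^n ∖ C such that |{ V ∈ I(C^T) : d_s(I(w^T), V) ≤ 2(n−l) }| ≥ g, where I(C^T) = { I(c^T) : c ∈ C }. -/
/-- The lifting `I(v^T)`: given an `F_q`-basis `b` of `K` and `v ∈ K^n`, identify `v`
with the `n×m` matrix over `F_q` whose `i`-th row is the coordinate vector of `v i`,
and take the row space of `[I_n | v^T]` inside `F_q^{n+m}`. -/
noncomputable def liftv (Fq : Type) [Field Fq] {K : Type} [Field K] [Algebra Fq K]
    {n m : ℕ} (b : Module.Basis (Fin m) Fq K) (v : Fin n → K) :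
    Submodule Fq (Fin (n + m) → Fq) :=
  Submodule.span Fq (Set.range fun i : Fin n =>
    Fin.append (fun i' : Fin n => if i = i' then (1 : Fq) else 0)
      (fun j' : Fin m => b.repr (v i) j'))

/-- Subspace distance `d_s(U,V) = dim U + dim V − 2 dim (U ⊓ V)`. -/
noncomputable def sdist (Fq : Type) [Field Fq] {N : ℕ}
    (U V : Submodule Fq (Fin N → Fq)) : ℕ :=
  Module.finrank Fq ↥U + Module.finrank Fq ↥V - 2 * Module.finrank Fq ↥(U ⊓ V)

open Module Submodule

section
variable {Fq K : Type} [Field Fq] [Field K] [Algebra Fq K] {n : ℕ}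

lemma minDist_le_rkw {C : Set (Fin n → K)} {u v : Fin n → K} (hu : u ∈ C) (hv : v ∈ C)
    (huv : u ≠ v) : minDist Fq C ≤ rkw Fq (u - v) :=
  Nat.sInf_le ⟨u, hu, v, hv, huv, rfl⟩

lemma exists_notMem_of_one_lt_minDist {C : Set (Fin n → K)} (hn : 0 < n)
    (hC : 1 < minDist Fq C) : ∃ w, w ∉ C := by
  by_contra! hall
  have : Nonempty (Fin n) := ⟨⟨0, hn⟩⟩
  have hone : rkw Fq ((fun _ => 1 : Fin n → K) - 0) = 1 := by
    rw [sub_zero, rkw, Set.range_const, finrank_span_singleton one_ne_zero]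
  have := minDist_le_rkw (Fq := Fq) (hall fun _ => 1) (hall 0)
    (fun h => one_ne_zero (congrFun h ⟨0, hn⟩))
  omega

lemma rkw_comp_of_injective (φ : K →ₗ[Fq] K) (hφ : Function.Injective φ) (v : Fin n → K) :
    rkw Fq (φ ∘ v) = rkw Fq v := by
  rw [rkw, rkw, Set.range_comp, ← Submodule.map_span]
  exact (Submodule.equivMapOfInjective φ hφ _).finrank_eq.symm

lemma rkw_comp_add_finrank_ker {α : Fin n → K} (hα : LinearIndependent Fq α)
    (G : K →ₗ[Fq] K) :
    rkw Fq (G ∘ α) + finrank Fq (LinearMap.ker (G.domRestrict (span Fq (Set.range α)))) = n := by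
  have := FiniteDimensional.span_of_finite Fq (Set.finite_range α)
  have := (G.domRestrict (span Fq (Set.range α))).finrank_range_add_finrank_ker
  rwa [LinearMap.range_domRestrict, finrank_span_eq_card hα, Fintype.card_fin,
    Submodule.map_span, ← Set.range_comp] at this

lemma natCard_span_eq_pow [Fintype Fq] {α : Fin n → K} (hα : LinearIndependent Fq α) :
    Nat.card (span Fq (Set.range α)) = Fintype.card Fq ^ n := by
  have := FiniteDimensional.span_of_finite Fq (Set.finite_range α)
  rw [natCard_eq_pow_finrank (K := Fq), finrank_span_eq_card hα, Fintype.card_fin,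
    Nat.card_eq_fintype_card]

lemma rkw_comp_le_of_pow_le_card [Fintype Fq] [Finite K] {α : Fin n → K}
    (hα : LinearIndependent Fq α) (G : K →ₗ[Fq] K) {l : ℕ}
    (hroots : Fintype.card Fq ^ l ≤ Nat.card {x | x ∈ span Fq (Set.range α) ∧ G x = 0}) :
    rkw Fq (G ∘ α) ≤ n - l := by
  have hrank := rkw_comp_add_finrank_ker hα G
  set W := span Fq (Set.range α)
  have hinj : Function.Injective fun x : {x | x ∈ W ∧ G x = 0} =>
      (⟨⟨x, x.2.1⟩, x.2.2⟩ : LinearMap.ker (G.domRestrict W)) :=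
    fun x y hxy => Subtype.ext (congrArg (fun z => (z.1 : K)) hxy)
  have hcard := hroots.trans (Nat.card_le_card_of_injective _ hinj)
  rw [Module.natCard_eq_pow_finrank (K := Fq), Nat.card_eq_fintype_card] at hcard
  have := (Nat.pow_le_pow_iff_right Fintype.one_lt_card).mp hcard
  omega

end

section Lift
variable {Fq K : Type} [Field Fq] [Field K] [Algebra Fq K] {n m : ℕ}
  (b : Basis (Fin m) Fq K)

noncomputable def liftRow (v : Fin n → K) (i : Fin n) : Fin (n + m) → Fq :=
  Fin.append (fun i' : Fin n => if i = i' then (1 : Fq) else 0) (fun j' => b.repr (v i) j')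

lemma liftv_eq_span_range_liftRow (v : Fin n → K) :
    liftv Fq b v = span Fq (Set.range (liftRow b v)) := rfl

lemma sum_smul_liftRow (v : Fin n → K) (u : Fin n → Fq) :
    ∑ i, u i • liftRow b v i = Fin.append u (b.repr (∑ i, u i • v i)) := by
  ext x
  refine Fin.addCases (fun i' => ?_) (fun j' => ?_) x
  · simp [liftRow, Finset.sum_apply]
  · simp [liftRow, Finset.sum_apply, map_sum]

lemma linearIndependent_liftRow (v : Fin n → K) : LinearIndependent Fq (liftRow b v) := by
  refine Fintype.linearIndependent_iff.mpr fun u hu i => ?_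
  simpa using congrFun ((sum_smul_liftRow b v u).symm.trans hu) (Fin.castAdd m i)

lemma finrank_liftv (v : Fin n → K) : finrank Fq (liftv Fq b v) = n := by
  rw [liftv_eq_span_range_liftRow, finrank_span_eq_card (linearIndependent_liftRow b v),
    Fintype.card_fin]

lemma liftv_injective : Function.Injective (liftv Fq b : (Fin n → K) → _) := by
  intro v v' hv
  funext i
  have hmem : liftRow b v i ∈ span Fq (Set.range (liftRow b v')) := by
    rw [← liftv_eq_span_range_liftRow, ← hv]
    exact subset_span (Set.mem_range_self i)
  obtain ⟨u, hu⟩ := (mem_span_range_iff_exists_fun Fq).mp hmem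
  rw [sum_smul_liftRow] at hu
  have hu_left : u = fun i' => if i = i' then 1 else 0 :=
    funext fun i' => by simpa [liftRow] using congrFun hu (Fin.castAdd m i')
  have hu_right : b.repr (∑ k, u k • v' k) = b.repr (v i) :=
    Finsupp.ext fun j' => by simpa [liftRow] using congrFun hu (Fin.natAdd n j')
  simpa [hu_left] using (b.repr.injective hu_right).symm

/-- Every `u ∈ F_q^n` with `∑ uᵢ (wᵢ - cᵢ) = 0` gives a common vector `(u, ∑ uᵢ wᵢ)` of `I(w)`
and `I(c)`, so `dim (I(w) ∩ I(c)) ≥ n - rk(w - c)`. -/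
lemma sdist_liftv_le (w c : Fin n → K) :
    sdist Fq (liftv Fq b w) (liftv Fq b c) ≤ 2 * rkw Fq (w - c) := by
  set E := Fintype.linearCombination Fq (w - c)
  set L := Fintype.linearCombination Fq (liftRow b w)
  have hE : finrank Fq (LinearMap.range E) + finrank Fq (LinearMap.ker E) = n := by
    rw [LinearMap.finrank_range_add_finrank_ker, Module.finrank_fin_fun]
  have hrange : finrank Fq (LinearMap.range E) = rkw Fq (w - c) := by
    rw [rkw, Fintype.range_linearCombination]
  have hmap : (LinearMap.ker E).map L ≤ liftv Fq b w ⊓ liftv Fq b c := by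
    rintro _ ⟨u, hu, rfl⟩
    have hwc : ∑ i, u i • w i = ∑ i, u i • c i := by
      rw [← sub_eq_zero, ← Finset.sum_sub_distrib]
      simpa [E, Fintype.linearCombination_apply, smul_sub] using hu
    have hLu : L u = ∑ i, u i • liftRow b c i := by
      simp only [L, Fintype.linearCombination_apply, sum_smul_liftRow, hwc]
    refine ⟨?_, ?_⟩
    · rw [liftv_eq_span_range_liftRow, ← Fintype.range_linearCombination]
      exact LinearMap.mem_range_self L u
    · rw [hLu, liftv_eq_span_range_liftRow]
      exact sum_mem fun i _ => smul_mem _ _ (subset_span (Set.mem_range_self i))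
  have hker : finrank Fq (LinearMap.ker E) ≤ finrank Fq ↥(liftv Fq b w ⊓ liftv Fq b c) :=
    calc finrank Fq (LinearMap.ker E)
        = finrank Fq ((LinearMap.ker E).map L) :=
          (Submodule.equivMapOfInjective L
            (linearIndependent_liftRow b w).fintypeLinearCombination_injective _).finrank_eq
      _ ≤ _ := Submodule.finrank_mono hmap
  simp only [sdist, finrank_liftv]
  omega

end Lift

lemma natCard_le_natCard_liftv_near {Fq K ι : Type} [Field Fq] [Finite Fq] [Field K]
    [Algebra Fq K] {n m : ℕ} (b : Basis (Fin m) Fq K) {C : Set (Fin n → K)} {A : Set ι}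
    (w : Fin n → K) {c : ι → Fin n → K} (hc : Function.Injective c) (hcC : ∀ a, c a ∈ C)
    {t : ℕ} (hrk : ∀ a ∈ A, rkw Fq (w - c a) ≤ t) :
    Nat.card A ≤ Nat.card {V : Submodule Fq (Fin (n + m) → Fq) //
      (∃ c ∈ C, V = liftv Fq b c) ∧ sdist Fq (liftv Fq b w) V ≤ 2 * t} := by
  refine Nat.card_le_card_of_injective
    (fun a => ⟨liftv Fq b (c a), ⟨c a, hcC a, rfl⟩,
      (sdist_liftv_le b w (c a)).trans (Nat.mul_le_mul_left 2 (hrk a a.2))⟩)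
    fun a a' h => Subtype.ext (hc (liftv_injective b (congrArg Subtype.val h)))

lemma eq_zero_of_forall_sum_mul_pow_eq_zero {K ι : Type} [Field K] [Fintype ι] {b : ι → K}
    {e : ι → ℕ} (he : Function.Injective e) (S : Finset K) (hlt : ∀ i, e i < S.card)
    (hS : ∀ t ∈ S, ∑ i, b i * t ^ e i = 0) : b = 0 := by
  classical
  funext i
  set P : Polynomial K := ∑ k, Polynomial.monomial (e k) (b k)
  have hP : P = 0 := by
    refine Polynomial.eq_zero_of_natDegree_lt_card_of_eval_eq_zero' P S (fun t ht => ?_) ?_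
    · simpa [P, Polynomial.eval_finsetSum] using hS t ht
    · refine lt_of_le_of_lt (Polynomial.natDegree_sum_le_of_forall_le _ _
        (n := S.card - 1) fun k _ => ?_) (by have := hlt i; omega)
      exact (Polynomial.natDegree_monomial_le _).trans (by have := hlt k; omega)
  have hcoeff : P.coeff (e i) = b i := by
    simp [P, Polynomial.coeff_monomial, he.eq_iff]
  simpa [hP] using hcoeff.symm

lemma pow_pow_eq_pow_pow_mod {M : Type} [Monoid M] {x : M} {q n : ℕ} (hx : x ^ q ^ n = x)
    (a : ℕ) : x ^ q ^ a = x ^ q ^ (a % n) := by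
  have hperiod : ∀ c, x ^ q ^ (n * c) = x := by
    intro c
    induction c with
    | zero => simp
    | succ c ih => rw [Nat.mul_succ, pow_add, pow_mul, ih, hx]
  conv_lhs => rw [← Nat.div_add_mod a n, pow_add, pow_mul, hperiod]

section Linearized
variable {Fq K : Type} [Field Fq] [Field K] [Algebra Fq K] (σ : K →ₐ[Fq] K) {h : ℕ}

noncomputable def linearized (a : Fin h → K) : K →ₗ[Fq] K :=
  ∑ k, a k • (σ ^ (k : ℕ)).toLinearMap

lemma linearized_apply (a : Fin h → K) (x : K) :
    linearized σ a x = ∑ k, a k * (σ ^ (k : ℕ)) x := by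
  simp [linearized]

lemma linearized_sub (a a' : Fin h → K) :
    linearized σ (a - a') = linearized σ a - linearized σ a' := by
  ext x
  simp [linearized_apply, sub_mul, Finset.sum_sub_distrib]

lemma pow_apply_linearized (j : ℕ) (a : Fin h → K) (x : K) :
    (σ ^ j) (linearized σ a x) = ∑ k, (σ ^ j) (a k) * (σ ^ (j + k)) x := by
  simp [linearized_apply, pow_add, AlgHom.mul_apply]

lemma frobeniusAlgHom_pow_pow_apply [Fintype Fq] (s t : ℕ) (x : K) :
    ((FiniteField.frobeniusAlgHom Fq K ^ s) ^ t) x = x ^ (Fintype.card Fq ^ s) ^ t := by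
  rw [← pow_mul, AlgHom.coe_pow, FiniteField.coe_frobeniusAlgHom, pow_iterate, ← pow_mul]

end Linearized

/-- On `F_{q^n}` the monomial `x^{σ^k}` agrees with `x^{q^(s k mod n)}`, and for `gcd(s, n) = 1`
these exponents are distinct and below `q^n = |F_{q^n}|`. -/
lemma eq_zero_of_linearized_frobenius_eq_zero {Fq K : Type} [Field Fq] [Fintype Fq] [Field K]
    [Algebra Fq K] [Finite K] {s n h : ℕ} (hsn : s.Coprime n) (hhn : h ≤ n)
    (hcard : Nat.card {t : K | t ^ Fintype.card Fq ^ n = t} = Fintype.card Fq ^ n)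
    {a : Fin h → K}
    (ha : ∀ t : K, t ^ Fintype.card Fq ^ n = t →
      linearized (FiniteField.frobeniusAlgHom Fq K ^ s) a t = 0) :
    a = 0 := by
  set q := Fintype.card Fq
  set S := {t : K | t ^ q ^ n = t}
  have hS : (Set.toFinite S).toFinset.card = q ^ n := by
    rw [← Nat.card_eq_card_finite_toFinset, hcard]
  have hmod : Function.Injective fun k : Fin h => s * k % n := by
    intro k k' hkk
    have := Nat.ModEq.cancel_left_of_coprime (Nat.coprime_comm.mp hsn) hkk
    exact Fin.ext (Nat.ModEq.eq_of_lt_of_lt this (by omega) (by omega))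
  refine eq_zero_of_forall_sum_mul_pow_eq_zero
    ((Nat.pow_right_injective Fintype.one_lt_card).comp hmod) _
    (fun k => hS ▸ Nat.pow_lt_pow_right Fintype.one_lt_card (Nat.mod_lt _ (k.pos.trans_le hhn)))
    fun t ht => ?_
  rw [Set.Finite.mem_toFinset] at ht
  rw [← ha t ht, linearized_apply]
  refine Finset.sum_congr rfl fun k _ => ?_
  rw [frobeniusAlgHom_pow_pow_apply, ← pow_mul, pow_pow_eq_pow_pow_mod ht]
  rfl

theorem exists_injective_codewords_near_word {Fq K : Type} [Field Fq] [Fintype Fq] [Field K]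
    [Algebra Fq K] [Finite K] {s n l h j : ℕ} (hsn : s.Coprime n) (hhl : h ≤ l) (hln : l < n)
    {α : Fin n → K} (hα : LinearIndependent Fq α)
    (hS : (span Fq (Set.range α) : Set K) = {x | x ^ Fintype.card Fq ^ n = x})
    {C : Set (Fin n → K)}
    (hwindow : ∀ b : Fin h → K,
      (fun i => ∑ k, b k * α i ^ (Fintype.card Fq ^ s) ^ (j + (k : ℕ))) ∈ C) :
    ∃ w : Fin n → K, ∃ c : (Fin h → K) → Fin n → K, Function.Injective c ∧ (∀ a, c a ∈ C) ∧
      ∀ a : Fin h → K, Nat.card {x : K | x ^ Fintype.card Fq ^ n = x ∧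
          x ^ (Fintype.card Fq ^ s) ^ l
            + ∑ k, a k * x ^ (Fintype.card Fq ^ s) ^ (k : ℕ) = 0} = Fintype.card Fq ^ l →
        w ≠ c a ∧ rkw Fq (w - c a) ≤ n - l := by
  set q := Fintype.card Fq
  set σ := FiniteField.frobeniusAlgHom Fq K ^ s
  have hσ : ∀ t x, (σ ^ t) x = x ^ (q ^ s) ^ t := frobeniusAlgHom_pow_pow_apply s
  have hσinj : ∀ t : ℕ, Function.Injective ⇑(σ ^ t) := fun t => (σ ^ t).toRingHom.injective
  have hcardS : Nat.card {x : K | x ^ q ^ n = x} = q ^ n := by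
    rw [← hS, SetLike.coe_sort_coe, natCard_span_eq_pow hα]
  have hvanish : ∀ G : K →ₗ[Fq] K, (∀ i, G (α i) = 0) → ∀ t, t ^ q ^ n = t → G t = 0 :=
    fun G hG t ht => LinearMap.eqOn_span (g := 0) (Set.forall_mem_range.mpr hG)
      (show t ∈ (span Fq (Set.range α) : Set K) from hS ▸ ht)
  set f : (Fin h → K) → K →ₗ[Fq] K := fun a => (σ ^ l).toLinearMap + linearized σ a
  have hf : ∀ a x, f a x = x ^ (q ^ s) ^ l + ∑ k, a k * x ^ (q ^ s) ^ (k : ℕ) := by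
    simp [f, linearized_apply, hσ]
  refine ⟨fun i => (σ ^ j) ((σ ^ l) (α i)), fun a i => -(σ ^ j) (linearized σ a (α i)),
    fun a a' hcc => ?_, fun a => ?_, fun a ha => ⟨fun hw => ?_, ?_⟩⟩
  · have hzero : ∀ i, linearized σ (a - a') (α i) = 0 := fun i => by
      rw [linearized_sub, LinearMap.sub_apply, sub_eq_zero]
      exact hσinj j (neg_inj.mp (congrFun hcc i))
    exact sub_eq_zero.mp (eq_zero_of_linearized_frobenius_eq_zero hsn (hhl.trans hln.le)
      hcardS (hvanish _ hzero))
  · convert hwindow fun k => -(σ ^ j) (a k) using 2 with i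
    show -(σ ^ j) (linearized σ a (α i)) = _
    rw [pow_apply_linearized]
    simp only [hσ, neg_mul, Finset.sum_neg_distrib]
  · have hzero : ∀ i, f a (α i) = 0 := fun i => by
      have := congrFun hw i
      rw [eq_neg_iff_add_eq_zero, ← map_add, map_eq_zero_iff _ (hσinj j)] at this
      exact this
    have hroots : {x : K | x ^ q ^ n = x ∧ x ^ (q ^ s) ^ l
        + ∑ k, a k * x ^ (q ^ s) ^ (k : ℕ) = 0} = {x : K | x ^ q ^ n = x} :=
      Set.ext fun x => ⟨And.left, fun hx => ⟨hx, hf a x ▸ hvanish _ hzero x hx⟩⟩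
    rw [hroots, hcardS] at ha
    exact hln.ne' (Nat.pow_right_injective Fintype.one_lt_card ha)
  · have hdiff : (fun i => (σ ^ j) ((σ ^ l) (α i))) - (fun i => -(σ ^ j) (linearized σ a (α i)))
        = (σ ^ j).toLinearMap ∘ (f a ∘ α) := by
      funext i
      simp [f]
    have hroots : {x | x ∈ span Fq (Set.range α) ∧ f a x = 0} = {x : K | x ^ q ^ n = x ∧
        x ^ (q ^ s) ^ l + ∑ k, a k * x ^ (q ^ s) ^ (k : ℕ) = 0} := by
      ext x
      rw [Set.mem_ofPred_eq, ← SetLike.mem_coe, hS, hf]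
      rfl
    rw [hdiff, rkw_comp_of_injective _ (hσinj j)]
    exact rkw_comp_le_of_pow_le_card hα (f a) (by rw [hroots, ha])

lemma linearIndependent_inv_mul {Fq K : Type} [Field Fq] [Field K] [Algebra Fq K] {n : ℕ}
    {α : Fin n → K} (hα : LinearIndependent Fq α) {β : K} (hβ : β ≠ 0) :
    LinearIndependent Fq fun i => β⁻¹ * α i :=
  hα.map' (LinearMap.mulLeft Fq β⁻¹)
    (LinearMap.ker_eq_bot.mpr (mul_right_injective₀ (inv_ne_zero hβ)))

lemma coe_span_range_inv_mul {Fq K : Type} [Field Fq] [Field K] [Algebra Fq K] {n : ℕ}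
    {α : Fin n → K} {β : K} (hβ : β ≠ 0) {S : Set K}
    (hspan : (span Fq (Set.range α) : Set K) = (β * ·) '' S) :
    (span Fq (Set.range fun i => β⁻¹ * α i) : Set K) = S := by
  have hrange : (Set.range fun i => β⁻¹ * α i) = LinearMap.mulLeft Fq β⁻¹ '' Set.range α := by
    rw [← Set.range_comp]
    rfl
  rw [hrange, ← Submodule.map_span, Submodule.map_coe, hspan, Set.image_image]
  simp [inv_mul_cancel_left₀ hβ]

theorem stmt_19_general (q s n m l h g j : ℕ) (Fq K : Type) [Field Fq] [Fintype Fq] [Field K]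
    [Fintype K] [Algebra Fq K]
    (hcard : Fintype.card Fq = q) (hnm : n ∣ m) (hs : Nat.gcd s m = 1)
    (𝒞 : Set (K → K))
    (β : K) (hβ : β ≠ 0)
    (α : Fin n → K) (hα : LinearIndependent Fq α)
    (hspan : (Submodule.span Fq (Set.range α) : Set K)
      = (fun y : K => β * y) '' {x : K | x ^ q ^ n = x})
    (C : Set (Fin n → K)) (hC : C = (fun g : K → K => fun i : Fin n => g (α i)) '' 𝒞)
    (d : ℕ) (hd : d = minDist Fq C)
    (hl1 : (n : ℤ) - d + 1 ≤ (l : ℤ))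
    (hl2 : (l : ℤ) ≤ (n : ℤ) - (((d - 1) / 2 : ℕ) : ℤ) - 1)
    (hhl : h ≤ l)
    (hGab : {f : K → K | ∃ a : Fin h → K, ∀ x : K,
        f x = ∑ i : Fin h, a i * x ^ ((q ^ s) ^ (j + (i : ℕ)))} ⊆ 𝒞)
    (Sub : Set (Fin h → K)) (hSubcard : Nat.card ↥Sub = g)
    (hSub : ∀ a ∈ Sub, (∀ i : Fin h, a i ^ q ^ n = a i) ∧
      Nat.card ↥{x : K | x ^ q ^ n = x ∧
        x ^ ((q ^ s) ^ l) + ∑ i : Fin h, a i * x ^ ((q ^ s) ^ (i : ℕ)) = 0} = q ^ l)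
    (b : Module.Basis (Fin m) Fq K) :
    ∃ w : Fin n → K, w ∉ C ∧
      g ≤ Nat.card {V : Submodule Fq (Fin (n + m) → Fq) //
        (∃ c ∈ C, V = liftv Fq b c) ∧ sdist Fq (liftv Fq b w) V ≤ 2 * (n - l)} := by
  subst hcard hd
  have hln : l < n := by omega
  have hfar : n - l < minDist Fq C := by omega
  rcases Nat.eq_zero_or_pos g with rfl | hg
  · obtain ⟨w, hw⟩ := exists_notMem_of_one_lt_minDist (Fq := Fq) (C := C) (by omega) (by omega)
    exact ⟨w, hw, Nat.zero_le _⟩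
  have hwindow : ∀ e : Fin h → K, (fun i => ∑ k, e k * (β⁻¹ * α i) ^
      (Fintype.card Fq ^ s) ^ (j + (k : ℕ))) ∈ C := fun e =>
    hC ▸ ⟨_, hGab ⟨fun k => e k * β⁻¹ ^ (Fintype.card Fq ^ s) ^ (j + (k : ℕ)), fun x => rfl⟩,
      funext fun i => by simp only [mul_pow, mul_assoc]⟩
  obtain ⟨w, c, hc, hcC, hnear⟩ := exists_injective_codewords_near_word
    (Fq := Fq) (Nat.Coprime.coprime_dvd_right hnm hs) hhl hln (linearIndependent_inv_mul hα hβ)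
    (coe_span_range_inv_mul hβ hspan) hwindow
  obtain ⟨⟨a₀, ha₀⟩⟩ := (Nat.card_pos_iff.mp (hSubcard ▸ hg)).1
  refine ⟨w, fun hwC => ?_, hSubcard ▸ natCard_le_natCard_liftv_near b w hc hcC
    fun a ha => (hnear a (hSub a ha).2).2⟩
  obtain ⟨hne, hrk⟩ := hnear a₀ (hSub a₀ ha₀).2
  have := minDist_le_rkw (Fq := Fq) hwC (hcC a₀) hne
  omega

/-- under the hypotheses of Statement 10 (with `j ≤ n−l`), the lifted
subspace code `I(C^T)` contains at least `g` subspaces within subspace distance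
`2(n−l)` of the lifted word `I(w^T)`, for some `w ∉ C`. -/
theorem stmt_19 (q s n m l h g j : ℕ) (Fq K : Type) [Field Fq] [Fintype Fq] [Field K]
    [Fintype K] [Algebra Fq K]
    (hcard : Fintype.card Fq = q) (hfin : Module.finrank Fq K = m)
    (hn : 0 < n) (hnm : n ∣ m) (hs : Nat.gcd s m = 1)
    (𝒞 : Set (K → K))
    (hlin : ∀ f ∈ 𝒞, ∃ N : ℕ, ∃ a : Fin N → K, ∀ x : K,
      f x = ∑ i : Fin N, a i * x ^ ((q ^ s) ^ (i : ℕ)))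
    (β : K) (hβ : β ≠ 0)
    (α : Fin n → K) (hα : LinearIndependent Fq α)
    (hspan : (Submodule.span Fq (Set.range α) : Set K)
      = (fun y : K => β * y) '' {x : K | x ^ q ^ n = x})
    (C : Set (Fin n → K)) (hC : C = (fun g : K → K => fun i : Fin n => g (α i)) '' 𝒞)
    (d : ℕ) (hd : d = minDist Fq C)
    (hl0 : 0 < l) (hh0 : 0 < h)
    (hl1 : (n : ℤ) - d + 1 ≤ (l : ℤ))
    (hl2 : (l : ℤ) ≤ (n : ℤ) - (((d - 1) / 2 : ℕ) : ℤ) - 1)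
    (hhl : h ≤ l)
    (hj : (j : ℤ) ≤ (n : ℤ) - (l : ℤ))
    (hGab : {f : K → K | ∃ a : Fin h → K, ∀ x : K,
        f x = ∑ i : Fin h, a i * x ^ ((q ^ s) ^ (j + (i : ℕ)))} ⊆ 𝒞)
    (Sub : Set (Fin h → K)) (hSubcard : Nat.card ↥Sub = g)
    (hSub : ∀ a ∈ Sub, (∀ i : Fin h, a i ^ q ^ n = a i) ∧
      Nat.card ↥{x : K | x ^ q ^ n = x ∧
        x ^ ((q ^ s) ^ l) + ∑ i : Fin h, a i * x ^ ((q ^ s) ^ (i : ℕ)) = 0} = q ^ l)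
    (b : Module.Basis (Fin m) Fq K) :
    ∃ w : Fin n → K, w ∉ C ∧
      g ≤ Nat.card {V : Submodule Fq (Fin (n + m) → Fq) //
        (∃ c ∈ C, V = liftv Fq b c) ∧ sdist Fq (liftv Fq b w) V ≤ 2 * (n - l)} :=
  stmt_19_general q s n m l h g j Fq K hcard hnm hs 𝒞 β hβ α hα hspan C hC d hd hl1 hl2 hhl hGab Sub
    hSubcard hSub b
end
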